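/- arXiv:2108.00125 — 3 statements merged into one kernel-verified Lean document; each statement's English description precedes it below -/
import Mathlib

section
/- If d_ω(x) = 0 and β_ω(x) = 0, then x is a Pareto stationary point. -/
open Filter Topology
open scoped RealInnerProductSpace

noncomputable section

/-- `Euc n` is Euclidean `n`-space `ℝ^n`. -/
abbrev Euc (n : ℕ) := EuclideanSpace ℝ (Fin n)

/-- `HasDirDeriv f x d D` : the one-sided directional derivative of `f` at `x`
in direction `d` exists and equals `D`, i.e. `(f (x + α • d) - f x)/α → D` as `α → 0⁺`. -/
def HasDirDeriv {n : ℕ} (f : Euc n → ℝ) (x d : Euc n) (D : ℝ) : Prop :=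
  Filter.Tendsto (fun α : ℝ => (f (x + α • d) - f x) / α)
    (nhdsWithin 0 (Set.Ioi 0)) (nhds D)

/-- `x` is Pareto stationary for the objectives `F i`:
for every direction `d`, `max_i F_i'(x; d) ≥ 0`, i.e. some objective has
nonnegative directional derivative in direction `d`. -/
def ParetoStationary {n m : ℕ} (F : Fin m → Euc n → ℝ) (x : Euc n) : Prop :=
  ∀ d : Euc n, ∃ i : Fin m, ∃ D : ℝ, HasDirDeriv (F i) x d D ∧ 0 ≤ D

/-- `θ_x(d) = max_i { ⟪∇g_i(x), d⟫ + ½⟪d, B_i(x) d⟫ + h_i(x+d) - h_i(x) }`. -/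
def theta {n m : ℕ} (g h : Fin m → Euc n → ℝ)
    (B : Fin m → Euc n → (Euc n →L[ℝ] Euc n)) (x d : Euc n) : ℝ :=
  ⨆ i : Fin m, (⟪gradient (g i) x, d⟫ + (1 / 2) * ⟪d, B i x d⟫ + h i (x + d) - h i x)

/-- `φ_{ω,x}(d) = θ_x(d) + (ω/2)‖d‖²`. -/
def phi {n m : ℕ} (g h : Fin m → Euc n → ℝ)
    (B : Fin m → Euc n → (Euc n →L[ℝ] Euc n)) (ω : ℝ) (x d : Euc n) : ℝ :=
  theta g h B x d + (ω / 2) * ‖d‖ ^ 2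

/-!
The hypotheses say exactly that `φ_{ω,x} ≥ 0`. Fix a direction `d`. For `α > 0` the value
`φ_{ω,x}(α d)` equals `α` times `⟪∇g_i(x), d⟫ + (h_i(x + α d) - h_i(x))/α + O(α)` for an index `i`
attaining the maximum, and as `α → 0⁺` this bracket tends to `F_i'(x; d)`, which exists because
`h_i` is convex and `g_i` differentiable. If every `F_i'(x; d)` were negative, all brackets would
eventually be negative, contradicting `φ_{ω,x}(α d) ≥ 0`.
-/

theorem HasDirDeriv.add {n : ℕ} {f g : Euc n → ℝ} {x d : Euc n} {D E : ℝ}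
    (hf : HasDirDeriv f x d D) (hg : HasDirDeriv g x d E) :
    HasDirDeriv (fun y => f y + g y) x d (D + E) := by
  unfold HasDirDeriv at *
  convert hf.add hg using 2
  ring

theorem HasGradientAt.hasDirDeriv {n : ℕ} {f : Euc n → ℝ} {f' x : Euc n}
    (hf : HasGradientAt f f' x) (d : Euc n) : HasDirDeriv f x d ⟪f', d⟫ := by
  have := ((hasGradientAt_iff_hasFDerivAt.mp hf).hasLineDerivAt d).tendsto_slope_zero_right
  simpa [HasDirDeriv, div_eq_inv_mul] using this

theorem ConvexOn.exists_hasDirDeriv {n : ℕ} {f : Euc n → ℝ} (hf : ConvexOn ℝ Set.univ f)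
    (x d : Euc n) : ∃ D, HasDirDeriv f x d D := by
  have hline : ConvexOn ℝ Set.univ fun t : ℝ => f (x + t • d) :=
    (hf.translate_right x).comp_linearMap (LinearMap.toSpanSingleton ℝ _ d)
  have := (hasDerivWithinAt_iff_tendsto_slope' (Set.self_notMem_Ioi (a := (0 : ℝ)))).mp
    (hline.hasDerivWithinAt_rightDeriv_of_mem_interior (by simp))
  simp only [slope_fun_def_field, sub_zero, zero_smul, add_zero] at this
  exact ⟨_, this⟩

theorem Filter.Tendsto.exists_nonneg_of_frequently {ι α : Type*} [Finite ι] {l : Filter α}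
    {u : ι → α → ℝ} {D : ι → ℝ} (hu : ∀ i, Tendsto (u i) l (𝓝 (D i)))
    (h : ∃ᶠ a in l, ∃ i, 0 ≤ u i a) : ∃ i, 0 ≤ D i := by
  by_contra! hneg
  have hev : ∀ᶠ a in l, ∀ i, u i a < 0 :=
    eventually_all.2 fun i => (hu i).eventually (gt_mem_nhds (hneg i))
  obtain ⟨a, ⟨i, hi⟩, ha⟩ := (h.and_eventually hev).exists
  exact (ha i).not_ge hi

theorem exists_phi_smul_eq {n m : ℕ} [Nonempty (Fin m)] (g h : Fin m → Euc n → ℝ)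
    (B : Fin m → Euc n → (Euc n →L[ℝ] Euc n)) (ω : ℝ) (x d : Euc n) {α : ℝ} (hα : α ≠ 0) :
    ∃ i, phi g h B ω x (α • d) = α * (⟪gradient (g i) x, d⟫ + (h i (x + α • d) - h i x) / α
      + α * (⟪d, B i x d⟫ / 2 + ω / 2 * ‖d‖ ^ 2)) := by
  obtain ⟨i, hi⟩ := exists_eq_ciSup_of_finite (f := fun i =>
    ⟪gradient (g i) x, α • d⟫ + (1 / 2) * ⟪α • d, B i x (α • d)⟫ + h i (x + α • d) - h i x)
  refine ⟨i, ?_⟩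
  rw [phi, theta, ← hi]
  simp only [map_smul, real_inner_smul_left, real_inner_smul_right, norm_smul, Real.norm_eq_abs,
    mul_pow, sq_abs]
  field_simp
  ring

theorem direction_zero_imp_pareto_stationary_general
    {n m : ℕ} (g h : Fin m → Euc n → ℝ)
    (B : Fin m → Euc n → (Euc n →L[ℝ] Euc n))
    (hm : 0 < m)
    (hg : ∀ i, ContDiff ℝ 2 (g i))
    (hh : ∀ i, ConvexOn ℝ Set.univ (h i))
    (ω : ℝ)
    (dω : Euc n → Euc n)
    (hmin : ∀ y d, phi g h B ω y (dω y) ≤ phi g h B ω y d)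
    (x : Euc n)
    (hβ : phi g h B ω x (dω x) = 0) :
    ParetoStationary (fun i y => g i y + h i y) x := by
  have : Nonempty (Fin m) := ⟨⟨0, hm⟩⟩
  intro d
  choose Dh hDh using fun i => (hh i).exists_hasDirDeriv x d
  have hF : ∀ i, HasDirDeriv (fun y => g i y + h i y) x d (⟪gradient (g i) x, d⟫ + Dh i) :=
    fun i => (((hg i).differentiable (by norm_num) x).hasGradientAt.hasDirDeriv d).add (hDh i)
  obtain ⟨i, hi⟩ : ∃ i, 0 ≤ ⟪gradient (g i) x, d⟫ + Dh i := by
    refine Tendsto.exists_nonneg_of_frequently (l := 𝓝[>] 0) (u := fun i α =>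
      ⟪gradient (g i) x, d⟫ + (h i (x + α • d) - h i x) / α
        + α * (⟪d, B i x d⟫ / 2 + ω / 2 * ‖d‖ ^ 2)) (fun i => ?_) ?_
    · have hα : Tendsto (fun α : ℝ => α) (𝓝[>] 0) (𝓝 0) := nhdsWithin_le_nhds
      simpa using (tendsto_const_nhds.add (hDh i)).add (hα.mul_const _)
    · refine Eventually.frequently ?_
      filter_upwards [self_mem_nhdsWithin] with α (hα : 0 < α)
      obtain ⟨i, hi⟩ := exists_phi_smul_eq g h B ω x d hα.ne'
      have hφ := hmin x (α • d)
      rw [hβ, hi] at hφ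
      exact ⟨i, nonneg_of_mul_nonneg_right (by linarith) hα⟩
  exact ⟨i, _, hF i, hi⟩

/-- if d_ω(x) = 0 and β_ω(x) = 0 then x is Pareto stationary. -/
theorem direction_zero_imp_pareto_stationary
    {n m : ℕ} (g h : Fin m → Euc n → ℝ)
    (B : Fin m → Euc n → (Euc n →L[ℝ] Euc n))
    (hm : 0 < m)
    (hg : ∀ i, ContDiff ℝ 2 (g i))
    (hsc : ∀ i, ∃ a : ℝ, 0 < a ∧ ∀ x y : Euc n,
      a * ‖x - y‖ ^ 2 ≤ ⟪gradient (g i) x - gradient (g i) y, x - y⟫)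
    (hh : ∀ i, ConvexOn ℝ Set.univ (h i))
    (hBsymm : ∀ i x (u v : Euc n), ⟪B i x u, v⟫ = ⟪u, B i x v⟫)
    (hBpos : ∀ i x (d : Euc n), d ≠ 0 → 0 < ⟪d, B i x d⟫)
    (ω : ℝ) (hω : 0 < ω)
    (dω : Euc n → Euc n)
    (hmin : ∀ y d, phi g h B ω y (dω y) ≤ phi g h B ω y d)
    (x : Euc n)
    (hd : dω x = 0) (hβ : phi g h B ω x (dω x) = 0) :
    ParetoStationary (fun i y => g i y + h i y) x :=
  direction_zero_imp_pareto_stationary_general g h B hm hg hh ω dω hmin x hβ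
end
end

section
/- If, for each i = 1,…,m, the matrix-valued map x ↦ B_i(x) is continuous on ℝ^n with symmetric positive definite values, then the optimal value function β_ω : ℝ^n → ℝ is continuous. -/
open Filter Topology
open scoped RealInnerProductSpace

noncomputable section

/-!
Near any `x₀` the minimisers `d_ω(x)` stay in a fixed ball. Indeed `θ_x(d)` is bounded below by
`-C (‖d‖ + 1)` locally uniformly in `x` (the gradient term is linear, the quadratic term is
nonnegative, and a convex function bounded on a ball grows at most linearly), while
`(ω/2)‖d‖²` is quadratic and `β_ω(x) ≤ φ_{ω,x}(0) = 0`. With the minimisers confined to a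
compact `K`, `β_ω` is squeezed between `x ↦ min_{d ∈ K} φ_{ω,x}(d)`, continuous by
compactness, and `x ↦ φ_{ω,x}(d_ω(x₀))`; both equal `β_ω(x₀)` at `x₀`.
-/

theorem ContDiff.continuous_gradient {E : Type*} [NormedAddCommGroup E] [InnerProductSpace ℝ E]
    [CompleteSpace E] {f : E → ℝ} {k : WithTop ℕ∞} (hf : ContDiff ℝ k f) (hk : k ≠ 0) :
    Continuous (gradient f) :=
  (InnerProductSpace.toDual ℝ E).symm.continuous.comp (hf.continuous_fderiv hk)

theorem continuous_ciSup_of_fintype {ι X : Type*} [Fintype ι] [Nonempty ι] [TopologicalSpace X]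
    {f : ι → X → ℝ} (hf : ∀ i, Continuous (f i)) : Continuous fun x => ⨆ i, f i x := by
  simp_rw [← Finset.sup'_univ_eq_ciSup]
  exact Continuous.finset_sup'_apply Finset.univ_nonempty fun i _ => hf i

theorem continuousAt_apply_minimizer {X Y : Type*} [TopologicalSpace X] [TopologicalSpace Y]
    {f : X → Y → ℝ} (hf : Continuous ↿f) {s : X → Y} (hs : ∀ x y, f x (s x) ≤ f x y)
    {K : Set Y} (hK : IsCompact K) {x₀ : X} (hsK : ∀ᶠ x in 𝓝 x₀, s x ∈ K) :
    ContinuousAt (fun x => f x (s x)) x₀ := by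
  have hs₀ : s x₀ ∈ K := hsK.self_of_nhds
  have hinf : sInf (f x₀ '' K) = f x₀ (s x₀) :=
    IsLeast.csInf_eq ⟨Set.mem_image_of_mem _ hs₀, Set.forall_mem_image.2 fun y _ => hs x₀ y⟩
  have hlower : ∀ᶠ x in 𝓝 x₀, sInf (f x '' K) ≤ f x (s x) := hsK.mono fun x hx =>
    csInf_le (hK.image (hf.comp (Continuous.prodMk_right x))).bddBelow (Set.mem_image_of_mem _ hx)
  refine tendsto_of_tendsto_of_tendsto_of_le_of_le' ?_ ?_ hlower
    (Eventually.of_forall fun x => hs x (s x₀))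
  · have := (hK.continuous_sInf hf).continuousAt (x := x₀)
    rwa [ContinuousAt, hinf] at this
  · exact (hf.comp (continuous_id.prodMk continuous_const)).continuousAt

theorem ConvexOn.neg_le_sub_of_norm_le {E : Type*} [NormedAddCommGroup E] [NormedSpace ℝ E]
    {f : E → ℝ} (hf : ConvexOn ℝ Set.univ f) {x : E} {M : ℝ}
    (hM : ∀ y ∈ Metric.closedBall x 1, ‖f y‖ ≤ M) (d : E) :
    -(2 * M * (‖d‖ + 1)) ≤ f (x + d) - f x := by
  have hx := abs_le.1 (hM x (Metric.mem_closedBall_self zero_le_one))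
  have hM₀ : 0 ≤ M := by linarith [hx.1, hx.2]
  rcases le_or_gt ‖d‖ 1 with hd | hd
  · have hxd := abs_le.1 (hM (x + d) (by simpa [dist_eq_norm] using hd))
    nlinarith [norm_nonneg d]
  · -- Convexity on the segment from `x` to `x + d`, through the point `x + t • d` at distance 1.
    set t := ‖d‖⁻¹ with ht
    have ht₀ : 0 < t := by positivity
    have ht₁ : t ≤ 1 := inv_le_one_of_one_le₀ hd.le
    have hseg : f (x + t • d) ≤ (1 - t) * f x + t * f (x + d) := by
      have hpt : (1 - t) • x + t • (x + d) = x + t • d := by module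
      have := hf.2 (Set.mem_univ x) (Set.mem_univ (x + d)) (sub_nonneg.2 ht₁) ht₀.le (by ring)
      rwa [hpt, smul_eq_mul, smul_eq_mul] at this
    have hy := abs_le.1 (hM (x + t • d) (by
      simp [dist_eq_norm, norm_smul, ht, inv_mul_cancel₀ (by positivity : ‖d‖ ≠ 0)]))
    have hscaled : -(2 * M) ≤ t * (f (x + d) - f x) := by nlinarith
    calc -(2 * M * (‖d‖ + 1)) ≤ ‖d‖ * -(2 * M) := by nlinarith
      _ ≤ ‖d‖ * (t * (f (x + d) - f x)) := mul_le_mul_of_nonneg_left hscaled (norm_nonneg d)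
      _ = f (x + d) - f x := by rw [← mul_assoc, ht, mul_inv_cancel₀ (by positivity), one_mul]

theorem le_max_of_sq_le_mul_add_one {ω C r : ℝ} (hω : 0 < ω) (h : ω / 2 * r ^ 2 ≤ C * (r + 1)) :
    r ≤ max 1 (4 * C / ω) := by
  rcases le_or_gt r 1 with hr | hr
  · exact hr.trans (le_max_left _ _)
  · refine le_max_of_le_right ((le_div_iff₀ hω).2 (le_of_not_gt fun hlt => ?_))
    nlinarith [mul_lt_mul_of_pos_right hlt (by linarith : 0 < r + 1),
      mul_pos (mul_pos hω (by linarith : 0 < r)) (sub_pos.2 hr)]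

section Subproblem

variable {n m : ℕ} {g h : Fin m → Euc n → ℝ} {B : Fin m → Euc n → (Euc n →L[ℝ] Euc n)}

theorem phi_zero (ω : ℝ) (x : Euc n) : phi g h B ω x 0 = 0 := by
  simp [phi, theta]

theorem continuous_phi [NeZero m] (hg : ∀ i, Continuous (gradient (g i)))
    (hh : ∀ i, Continuous (h i)) (hB : ∀ i, Continuous (B i)) (ω : ℝ) :
    Continuous fun p : Euc n × Euc n => phi g h B ω p.1 p.2 := by
  refine .add (continuous_ciSup_of_fintype fun i => ?_) (by fun_prop)
  have hBapp : Continuous fun p : Euc n × Euc n => B i p.1 p.2 :=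
    isBoundedBilinearMap_apply.continuous.comp
      (((hB i).comp continuous_fst).prodMk continuous_snd)
  have := hg i
  have := hh i
  fun_prop

theorem neg_le_theta (i : Fin m) {x : Euc n} {G M : ℝ} (hG : ‖gradient (g i) x‖ ≤ G)
    (hh : ConvexOn ℝ Set.univ (h i)) (hM : ∀ y ∈ Metric.closedBall x 1, ‖h i y‖ ≤ M)
    (hB : ∀ d, 0 ≤ ⟪d, B i x d⟫) (d : Euc n) :
    -((G + 2 * M) * (‖d‖ + 1)) ≤ theta g h B x d := by
  have hgrad : -(G * (‖d‖ + 1)) ≤ ⟪gradient (g i) x, d⟫ := by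
    have := neg_abs_le ⟪gradient (g i) x, d⟫
    have := abs_real_inner_le_norm (gradient (g i) x) d
    nlinarith [norm_nonneg d, norm_nonneg (gradient (g i) x)]
  have hconv := hh.neg_le_sub_of_norm_le hM d
  calc -((G + 2 * M) * (‖d‖ + 1))
      ≤ ⟪gradient (g i) x, d⟫ + (1 / 2) * ⟪d, B i x d⟫ + h i (x + d) - h i x := by
        nlinarith [hB d]
    _ ≤ theta g h B x d := le_ciSup (f := fun j =>
        ⟪gradient (g j) x, d⟫ + (1 / 2) * ⟪d, B j x d⟫ + h j (x + d) - h j x)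
        (Set.finite_range _).bddAbove i

theorem norm_le_of_phi_nonpos (i : Fin m) {x d : Euc n} {G M ω : ℝ}
    (hG : ‖gradient (g i) x‖ ≤ G) (hh : ConvexOn ℝ Set.univ (h i))
    (hM : ∀ y ∈ Metric.closedBall x 1, ‖h i y‖ ≤ M) (hB : ∀ d, 0 ≤ ⟪d, B i x d⟫)
    (hω : 0 < ω) (hd : phi g h B ω x d ≤ 0) :
    ‖d‖ ≤ max 1 (4 * (G + 2 * M) / ω) := by
  have := neg_le_theta i hG hh hM hB d
  exact le_max_of_sq_le_mul_add_one hω (by rw [phi] at hd; linarith)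

end Subproblem

theorem beta_continuous_general
    {n m : ℕ} (g h : Fin m → Euc n → ℝ)
    (B : Fin m → Euc n → (Euc n →L[ℝ] Euc n))
    (hm : 0 < m)
    (hg : ∀ i, ContDiff ℝ 2 (g i))
    (hh : ∀ i, ConvexOn ℝ Set.univ (h i))
    (hBpos : ∀ i x (d : Euc n), d ≠ 0 → 0 < ⟪d, B i x d⟫)
    (hBcont : ∀ i, Continuous (fun x => B i x))
    (ω : ℝ) (hω : 0 < ω)
    (dω : Euc n → Euc n)
    (hmin : ∀ y d, phi g h B ω y (dω y) ≤ phi g h B ω y d) :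
    Continuous (fun x => phi g h B ω x (dω x)) := by
  have : NeZero m := ⟨hm.ne'⟩
  let i₀ : Fin m := ⟨0, hm⟩
  have hgrad : ∀ i, Continuous (gradient (g i)) := fun i => (hg i).continuous_gradient two_ne_zero
  have hhc : ∀ i, Continuous (h i) := fun i => continuousOn_univ.1 ((hh i).continuousOn isOpen_univ)
  have hBnonneg : ∀ x d, 0 ≤ ⟪d, B i₀ x d⟫ := fun x d => by
    rcases eq_or_ne d 0 with rfl | hd
    · simp
    · exact (hBpos i₀ x d hd).le
  refine continuous_iff_continuousAt.2 fun x₀ => ?_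
  obtain ⟨G, hG⟩ :=
    (isCompact_closedBall x₀ 1).exists_bound_of_continuousOn (hgrad i₀).continuousOn
  obtain ⟨M, hM⟩ := (isCompact_closedBall x₀ 2).exists_bound_of_continuousOn (hhc i₀).continuousOn
  refine continuousAt_apply_minimizer (continuous_phi hgrad hhc hBcont ω) hmin
    (isCompact_closedBall 0 (max 1 (4 * (G + 2 * M) / ω))) ?_
  filter_upwards [Metric.closedBall_mem_nhds x₀ one_pos] with x hx
  have hball : Metric.closedBall x 1 ⊆ Metric.closedBall x₀ 2 :=
    Metric.closedBall_subset_closedBall' (by rw [Metric.mem_closedBall] at hx; linarith)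
  exact mem_closedBall_zero_iff.2 <| norm_le_of_phi_nonpos i₀ (hG x hx) (hh i₀)
    (fun y hy => hM y (hball hy)) (hBnonneg x) hω ((hmin x 0).trans (phi_zero ω x).le)

/-- continuity of the optimal value function β_ω. -/
theorem beta_continuous
    {n m : ℕ} (g h : Fin m → Euc n → ℝ)
    (B : Fin m → Euc n → (Euc n →L[ℝ] Euc n))
    (hm : 0 < m)
    (hg : ∀ i, ContDiff ℝ 2 (g i))
    (hsc : ∀ i, ∃ a : ℝ, 0 < a ∧ ∀ x y : Euc n,
      a * ‖x - y‖ ^ 2 ≤ ⟪gradient (g i) x - gradient (g i) y, x - y⟫)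
    (hh : ∀ i, ConvexOn ℝ Set.univ (h i))
    (hBsymm : ∀ i x (u v : Euc n), ⟪B i x u, v⟫ = ⟪u, B i x v⟫)
    (hBpos : ∀ i x (d : Euc n), d ≠ 0 → 0 < ⟪d, B i x d⟫)
    (hBcont : ∀ i, Continuous (fun x => B i x))
    (ω : ℝ) (hω : 0 < ω)
    (dω : Euc n → Euc n)
    (hmin : ∀ y d, phi g h B ω y (dω y) ≤ phi g h B ω y d)
    (huniq : ∀ y d, (∀ d', phi g h B ω y d ≤ phi g h B ω y d') → d = dω y) :
    Continuous (fun x => phi g h B ω x (dω x)) :=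
  beta_continuous_general g h B hm hg hh hBpos hBcont ω hω dω hmin
end
end

section
/- Suppose each gradient ∇g_i is Lipschitz continuous on ℝ^n with constant L. Let ω > 0, x ∈ ℝ^n and put d := d_ω(x). Then for every i = 1,…,m, F_i(x + d) ≤ F_i(x) + ((L − 2ω)/2)‖d‖²; moreover, if d ≠ 0 this inequality is strict. In particular, if ω > L/2 and d ≠ 0 then F_i(x + d) < F_i(x) for all i. -/
open Filter Topology
open scoped RealInnerProductSpace

noncomputable section

/-!
Two estimates combine. The descent lemma bounds `g_i (x + d)` by its first-order model plus
`(L/2)‖d‖²`. The model `θ_x` is convex with `θ_x 0 = 0`, so `θ_x (t • d) ≤ t θ_x d` on `[0, 1]`;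
comparing `φ_{ω,x} d ≤ φ_{ω,x} (t • d)` and letting `t → 1` gives `θ_x d ≤ -ω‖d‖²`.
Adding the two, `F_i (x + d) + ½⟪d, B_i d⟫ ≤ F_i x + ((L - 2ω)/2)‖d‖²`, and `⟪d, B_i d⟫ > 0`
for `d ≠ 0` makes the inequality strict.
-/

open Set

section Descent

variable {E : Type*} [NormedAddCommGroup E] [InnerProductSpace ℝ E] [CompleteSpace E]
  {f : E → ℝ} {L : NNReal}

theorem hasDerivAt_apply_add_smul (hf : Differentiable ℝ f) (x d : E) (t : ℝ) :
    HasDerivAt (fun s : ℝ => f (x + s • d)) ⟪gradient f (x + t • d), d⟫ t := by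
  have hline : HasDerivAt (fun s : ℝ => x + s • d) d t := by
    simpa using ((hasDerivAt_id t).smul_const d).const_add x
  simpa [Function.comp_def] using
    (hf (x + t • d)).hasGradientAt.hasFDerivAt.comp_hasDerivAt t hline

theorem inner_gradient_add_smul_sub_le (hL : LipschitzWith L (gradient f)) (x d : E) {t : ℝ}
    (ht : 0 ≤ t) : ⟪gradient f (x + t • d) - gradient f x, d⟫ ≤ L * t * ‖d‖ ^ 2 :=
  calc ⟪gradient f (x + t • d) - gradient f x, d⟫
      ≤ ‖gradient f (x + t • d) - gradient f x‖ * ‖d‖ := real_inner_le_norm _ _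
    _ ≤ (L * ‖(x + t • d) - x‖) * ‖d‖ := by
        gcongr
        simpa only [dist_eq_norm] using hL.dist_le_mul (x + t • d) x
    _ = L * t * ‖d‖ ^ 2 := by
        rw [add_sub_cancel_left, norm_smul, Real.norm_of_nonneg ht]; ring

theorem apply_add_le_of_lipschitzWith_gradient (hf : Differentiable ℝ f)
    (hL : LipschitzWith L (gradient f)) (x d : E) :
    f (x + d) ≤ f x + ⟪gradient f x, d⟫ + L / 2 * ‖d‖ ^ 2 := by
  set G : ℝ → ℝ := fun t => f (x + t • d) - t * ⟪gradient f x, d⟫ - L / 2 * t ^ 2 * ‖d‖ ^ 2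
  have hG : ∀ t, HasDerivAt G
      (⟪gradient f (x + t • d), d⟫ - ⟪gradient f x, d⟫ - L * t * ‖d‖ ^ 2) t := fun t => by
    have hsq := ((hasDerivAt_pow 2 t).const_mul ((L : ℝ) / 2)).mul_const (‖d‖ ^ 2)
    refine (((hasDerivAt_apply_add_smul hf x d t).sub
      ((hasDerivAt_id' t).mul_const _)).sub hsq).congr_deriv ?_
    simp only [Nat.cast_ofNat, Nat.reduceSub, pow_one, one_mul]
    ring
  have hanti : AntitoneOn G (Ici 0) := by
    refine antitoneOn_of_hasDerivWithinAt_nonpos (convex_Ici 0)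
      (fun t _ => (hG t).continuousAt.continuousWithinAt)
      (fun t _ => (hG t).hasDerivWithinAt) fun t ht => ?_
    rw [interior_Ici] at ht
    have := inner_gradient_add_smul_sub_le hL x d (le_of_lt ht)
    rw [inner_sub_left] at this
    linarith
  have h01 := hanti self_mem_Ici (mem_Ici.2 zero_le_one) zero_le_one
  simp only [G, zero_smul, one_smul, add_zero, zero_mul, one_mul, sub_zero, one_pow,
    ne_eq, OfNat.ofNat_ne_zero, not_false_eq_true, zero_pow, mul_zero] at h01
  linarith

end Descent

theorem model_smul_le {E : Type*} [NormedAddCommGroup E] [InnerProductSpace ℝ E]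
    (c : E) {A : E →L[ℝ] E} {φ : E → ℝ} (hφ : ConvexOn ℝ univ φ) (x : E) {d : E}
    (hA : 0 ≤ ⟪d, A d⟫) {t : ℝ} (ht₀ : 0 ≤ t) (ht₁ : t ≤ 1) :
    ⟪c, t • d⟫ + 1 / 2 * ⟪t • d, A (t • d)⟫ + φ (x + t • d) - φ x
      ≤ t * (⟪c, d⟫ + 1 / 2 * ⟪d, A d⟫ + φ (x + d) - φ x) := by
  have hφ_seg : φ (x + t • d) ≤ (1 - t) * φ x + t * φ (x + d) := by
    have := hφ.2 (mem_univ x) (mem_univ (x + d)) (sub_nonneg.2 ht₁) ht₀ (by ring)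
    rwa [show (1 - t) • x + t • (x + d) = x + t • d by module] at this
  rw [map_smul, real_inner_smul_left, real_inner_smul_right, real_inner_smul_right]
  nlinarith [mul_nonneg (mul_nonneg ht₀ (sub_nonneg.2 ht₁)) hA]

theorem le_neg_two_mul_of_forall_Ico {a b : ℝ}
    (h : ∀ t ∈ Ico (0 : ℝ) 1, a + b ≤ t * a + t ^ 2 * b) : a ≤ -2 * b := by
  have hbound : ∀ t ∈ Ico (0 : ℝ) 1, a ≤ -(1 + t) * b := fun t ht => by
    have hpos : 0 < 1 - t := sub_pos.2 ht.2
    refine le_of_mul_le_mul_left ?_ hpos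
    nlinarith [h t ht]
  have hlim : Tendsto (fun t : ℝ => -(1 + t) * b) (𝓝[<] 1) (𝓝 (-2 * b)) := by
    have := ((continuous_const.add continuous_id).neg.mul continuous_const).tendsto' 1 (-2 * b)
      (by norm_num : -(1 + (1 : ℝ)) * b = -2 * b)
    exact this.mono_left nhdsWithin_le_nhds
  exact ge_of_tendsto hlim (eventually_of_mem (Ico_mem_nhdsLT zero_lt_one) hbound)

section Theta

variable {n m : ℕ} (g h : Fin m → Euc n → ℝ) (B : Fin m → Euc n → (Euc n →L[ℝ] Euc n))

theorem le_theta (x d : Euc n) (i : Fin m) :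
    ⟪gradient (g i) x, d⟫ + 1 / 2 * ⟪d, B i x d⟫ + h i (x + d) - h i x ≤ theta g h B x d :=
  le_ciSup (f := fun i => ⟪gradient (g i) x, d⟫ + 1 / 2 * ⟪d, B i x d⟫ + h i (x + d) - h i x)
    (Finite.bddAbove_range _) i

variable [Nonempty (Fin m)] {h}

theorem theta_smul_le (hh : ∀ i, ConvexOn ℝ univ (h i)) (x : Euc n) {d : Euc n}
    (hB : ∀ i, 0 ≤ ⟪d, B i x d⟫) {t : ℝ} (ht₀ : 0 ≤ t) (ht₁ : t ≤ 1) :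
    theta g h B x (t • d) ≤ t * theta g h B x d :=
  ciSup_le fun i => (model_smul_le _ (hh i) x (hB i) ht₀ ht₁).trans
    (mul_le_mul_of_nonneg_left (le_theta g h B x d i) ht₀)

theorem theta_le_neg_mul_sq (hh : ∀ i, ConvexOn ℝ univ (h i)) {ω : ℝ} {x d : Euc n}
    (hB : ∀ i, 0 ≤ ⟪d, B i x d⟫) (hmin : ∀ e, phi g h B ω x d ≤ phi g h B ω x e) :
    theta g h B x d ≤ -ω * ‖d‖ ^ 2 := by
  have := le_neg_two_mul_of_forall_Ico (a := theta g h B x d) (b := ω / 2 * ‖d‖ ^ 2)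
    fun t ht => by
      have hphi := hmin (t • d)
      have hθ := theta_smul_le g B hh x hB ht.1 ht.2.le
      rw [phi, phi, norm_smul, Real.norm_eq_abs, mul_pow, sq_abs] at hphi
      linarith
  linarith

end Theta

theorem full_step_descent_general
    {n m : ℕ} (g h : Fin m → Euc n → ℝ)
    (B : Fin m → Euc n → (Euc n →L[ℝ] Euc n))
    (hg : ∀ i, ContDiff ℝ 2 (g i))
    (hh : ∀ i, ConvexOn ℝ Set.univ (h i))
    (hBpos : ∀ i x (d : Euc n), d ≠ 0 → 0 < ⟪d, B i x d⟫)
    (L : NNReal) (hL : ∀ i, LipschitzWith L (gradient (g i)))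
    (ω : ℝ)
    (dω : Euc n → Euc n)
    (hmin : ∀ y d, phi g h B ω y (dω y) ≤ phi g h B ω y d)
    (x : Euc n) :
    ∀ i,
      (g i (x + dω x) + h i (x + dω x)
          ≤ g i x + h i x + (((L : ℝ) - 2 * ω) / 2) * ‖dω x‖ ^ 2) ∧
      (dω x ≠ 0 → g i (x + dω x) + h i (x + dω x)
          < g i x + h i x + (((L : ℝ) - 2 * ω) / 2) * ‖dω x‖ ^ 2) ∧
      ((L : ℝ) / 2 < ω ∧ dω x ≠ 0 →
          g i (x + dω x) + h i (x + dω x) < g i x + h i x) := by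
  intro i
  have : Nonempty (Fin m) := ⟨i⟩
  set d := dω x
  have hBd : ∀ j, 0 ≤ ⟪d, B j x d⟫ := fun j => by
    rcases eq_or_ne d 0 with hd | hd
    · simp [hd]
    · exact (hBpos j x d hd).le
  have hdesc := apply_add_le_of_lipschitzWith_gradient ((hg i).differentiable (by norm_num))
    (hL i) x d
  have hmodel := le_theta g h B x d i
  have htheta := theta_le_neg_mul_sq g B hh hBd (hmin x)
  have hmain : g i (x + d) + h i (x + d) + 1 / 2 * ⟪d, B i x d⟫
      ≤ g i x + h i x + ((L - 2 * ω) / 2) * ‖d‖ ^ 2 := by linarith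
  refine ⟨by linarith [hBd i], fun hd => by linarith [hBpos i x d hd], fun ⟨hLω, hd⟩ => ?_⟩
  have hneg : ((L - 2 * ω) / 2) * ‖d‖ ^ 2 < 0 :=
    mul_neg_of_neg_of_pos (by linarith) (by positivity)
  linarith [hBpos i x d hd]

/-- descent property of the full proximal quasi-Newton step. -/
theorem full_step_descent
    {n m : ℕ} (g h : Fin m → Euc n → ℝ)
    (B : Fin m → Euc n → (Euc n →L[ℝ] Euc n))
    (hm : 0 < m)
    (hg : ∀ i, ContDiff ℝ 2 (g i))
    (hsc : ∀ i, ∃ a : ℝ, 0 < a ∧ ∀ x y : Euc n,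
      a * ‖x - y‖ ^ 2 ≤ ⟪gradient (g i) x - gradient (g i) y, x - y⟫)
    (hh : ∀ i, ConvexOn ℝ Set.univ (h i))
    (hBsymm : ∀ i x (u v : Euc n), ⟪B i x u, v⟫ = ⟪u, B i x v⟫)
    (hBpos : ∀ i x (d : Euc n), d ≠ 0 → 0 < ⟪d, B i x d⟫)
    (L : NNReal) (hL : ∀ i, LipschitzWith L (gradient (g i)))
    (ω : ℝ) (hω : 0 < ω)
    (dω : Euc n → Euc n)
    (hmin : ∀ y d, phi g h B ω y (dω y) ≤ phi g h B ω y d)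
    (x : Euc n) :
    ∀ i,
      (g i (x + dω x) + h i (x + dω x)
          ≤ g i x + h i x + (((L : ℝ) - 2 * ω) / 2) * ‖dω x‖ ^ 2) ∧
      (dω x ≠ 0 → g i (x + dω x) + h i (x + dω x)
          < g i x + h i x + (((L : ℝ) - 2 * ω) / 2) * ‖dω x‖ ^ 2) ∧
      ((L : ℝ) / 2 < ω ∧ dω x ≠ 0 →
          g i (x + dω x) + h i (x + dω x) < g i x + h i x) :=
  full_step_descent_general g h B hg hh hBpos L hL ω dω hmin x
end
end
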